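/- arXiv:1803.03833 — 3 statements merged into one kernel-verified Lean document; each statement's English description precedes it below -/
import Mathlib

section
/- Let G = (V, E, w, μ) be a submodular hypergraph and p > 1. Then the second variational eigenvalue of △_p satisfies λ₂^{(p)} = inf over nonconstant x ∈ ℝ^N of 𝓡_p(x) = Q_p(x)/Z_{p,μ}(x). -/
/-!
For a nonconstant `x`, normalizing the pencil `a x + b 𝟙` (`a² + b² = 1`) onto `S_{p,μ}` gives a
connected symmetric set, hence one of genus at least 2, on which `Q_p ≤ 𝓡_p(x)`: the quotient
`𝓡_p` is invariant under `x ↦ a x + b 𝟙`, and `Z_{p,μ} ≤ ‖·‖_{ℓp,μ}^p`. This gives `λ₂ ≤ inf 𝓡_p`.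

Conversely, on a closed symmetric set of genus at least 2 the odd continuous function
`x ↦ Σ_v μ_v |x_v|^{p-1} sgn(x_v)` must vanish. At such a balanced point `c = 0` minimises
`‖x - c 𝟙‖_{ℓp,μ}^p` (tangent line inequality for the convex function `|·|^p`), so there
`𝓡_p = Q_p` on the sphere, and `inf 𝓡_p ≤ λ₂`.
-/

open scoped BigOperators
open Finset

noncomputable section

/-- A set function on the ground set `Fin N` is submodular:
`F(S ∪ T) + F(S ∩ T) ≤ F(S) + F(T)` for all `S, T`. -/
def Submodular {N : ℕ} (F : Finset (Fin N) → ℝ) : Prop :=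
  ∀ S T : Finset (Fin N), F (S ∪ T) + F (S ∩ T) ≤ F S + F T

/-- The Lovász extension of a set function, written in its (tie-breaking independent)
level-set integral form, which agrees with the usual sorted-sum definition
`f(x) = Σ_{j=1}^{N-1} F({i_1,…,i_j})(x_{i_j} − x_{i_{j+1}})` for a nonincreasing
ordering `x_{i_1} ≥ … ≥ x_{i_N}`. -/
def lovasz {N : ℕ} (F : Finset (Fin N) → ℝ) (x : Fin N → ℝ) : ℝ :=
  ∫ t in (⨅ v, x v)..(⨆ v, x v), F (Finset.univ.filter fun v => t < x v)

/-- The inner product `⟨y, x⟩ = Σ_v y_v x_v`. -/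
def dotp {N : ℕ} (y x : Fin N → ℝ) : ℝ := ∑ v, y v * x v

/-- The set of subgradients of `f : ℝ^N → ℝ` at `x`. -/
def subgradients {N : ℕ} (f : (Fin N → ℝ) → ℝ) (x : Fin N → ℝ) : Set (Fin N → ℝ) :=
  {y | ∀ x', dotp y (x' - x) ≤ f x' - f x}

/-- The base polytope of a set function: `y(S) ≤ F(S)` for all `S ⊆ V` and `y(V) = 0`. -/
def basePolytope {N : ℕ} (F : Finset (Fin N) → ℝ) : Set (Fin N → ℝ) :=
  {y | (∀ S : Finset (Fin N), ∑ v ∈ S, y v ≤ F S) ∧ ∑ v, y v = 0}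

/-- The sign function (`sgn 0 = 0`). -/
def sgn (a : ℝ) : ℝ := if 0 < a then 1 else if a < 0 then -1 else 0

/-- A vector is nonconstant. -/
def Nonconstant {N : ℕ} (x : Fin N → ℝ) : Prop := ∃ u v, x u ≠ x v

/-- Restriction of a vector to a subset of vertices (zero outside that subset). -/
def restrictVec {N : ℕ} (x : Fin N → ℝ) (C : Finset (Fin N)) : Fin N → ℝ :=
  fun v => if v ∈ C then x v else 0

/-- Euclidean norm on `ℝ^N`. -/
def l2norm {N : ℕ} (z : Fin N → ℝ) : ℝ := Real.sqrt (∑ v, z v ^ 2)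

/-- Supremum norm on `ℝ^N`. -/
def linfNorm {N : ℕ} (z : Fin N → ℝ) : ℝ := ⨆ v, |z v|

/-- A submodular hypergraph `G = (V, E, w, μ)` on `V = Fin N`: hyperedges `E`,
positive vertex weights `μ`, and for each hyperedge `e ∈ E` a scalar `θ_e > 0`
together with a normalized symmetric submodular weight `w_e : 2^e → [0,1]`
(extended to all of `2^V` by `w_e(S) = w_e(S ∩ e)`). -/
structure SubmodularHypergraph (N : ℕ) where
  E : Finset (Finset (Fin N))
  μ : Fin N → ℝ
  μ_pos : ∀ v, 0 < μ v
  θ : Finset (Fin N) → ℝ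
  θ_pos : ∀ e ∈ E, 0 < θ e
  w : Finset (Fin N) → Finset (Fin N) → ℝ
  w_inter : ∀ e ∈ E, ∀ S, w e S = w e (S ∩ e)
  w_submodular : ∀ e ∈ E, Submodular (w e)
  w_nonneg : ∀ e ∈ E, ∀ S, 0 ≤ w e S
  w_le_one : ∀ e ∈ E, ∀ S, w e S ≤ 1
  w_empty : ∀ e ∈ E, w e ∅ = 0
  w_normalized : ∀ e ∈ E, ∃ S ⊆ e, w e S = 1
  w_symm : ∀ e ∈ E, ∀ S ⊆ e, w e S = w e (e \ S)

namespace SubmodularHypergraph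

variable {N : ℕ} (G : SubmodularHypergraph N)

/-- `vol(S) = Σ_{v ∈ S} μ_v`. -/
def vol (S : Finset (Fin N)) : ℝ := ∑ v ∈ S, G.μ v

/-- `vol(∂S) = Σ_{e ∈ E} θ_e w_e(S)`. -/
def volB (S : Finset (Fin N)) : ℝ := ∑ e ∈ G.E, G.θ e * G.w e S

/-- The Lovász extension `f_e` of the hyperedge weight `w_e`. -/
def fe (e : Finset (Fin N)) (x : Fin N → ℝ) : ℝ := lovasz (G.w e) x

/-- `Q_p(x) = Σ_{e ∈ E} θ_e f_e(x)^p`. -/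
def Q (p : ℝ) (x : Fin N → ℝ) : ℝ := ∑ e ∈ G.E, G.θ e * G.fe e x ^ p

/-- `‖x‖_{ℓp,μ}^p = Σ_v μ_v |x_v|^p`. -/
def normLpPow (p : ℝ) (x : Fin N → ℝ) : ℝ := ∑ v, G.μ v * |x v| ^ p

/-- `G` is connected: `vol(∂S) > 0` for all nonempty proper `S ⊂ V`. -/
def Connected : Prop :=
  ∀ S : Finset (Fin N), S.Nonempty → S ≠ Finset.univ → 0 < G.volB S

/-- Vertices `u, v` are connected in `G`: every `S` with `u ∈ S`, `v ∉ S` has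
`vol(∂S) > 0`. -/
def VertConnected (u v : Fin N) : Prop :=
  ∀ S : Finset (Fin N), u ∈ S → v ∉ S → 0 < G.volB S

/-- The conductance `c(S) = vol(∂S) / min{vol(S), vol(V∖S)}`. -/
def conductance (S : Finset (Fin N)) : ℝ := G.volB S / min (G.vol S) (G.vol Sᶜ)

/-- The degree `d_v = Σ_{e ∈ E : v ∈ e} θ_e`. -/
def degree (v : Fin N) : ℝ := ∑ e ∈ G.E.filter (fun e => v ∈ e), G.θ e

/-- `τ = max_v d_v / μ_v`. -/
def tau : ℝ := ⨆ v, G.degree v / G.μ v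

/-- `G` is homogeneous: `w_e(S) = 1` for every `S ∈ 2^e ∖ {∅, e}`. -/
def Homogeneous : Prop :=
  ∀ e ∈ G.E, ∀ S ⊆ e, S ≠ ∅ → S ≠ e → G.w e S = 1

/-- `(λ, x)` is an eigenpair of the `p`-Laplacian `△_p` (for `p > 1` and for `p = 1`). -/
def IsEigenpair (p lam : ℝ) (x : Fin N → ℝ) : Prop :=
  x ≠ 0 ∧
  ∃ y : Finset (Fin N) → Fin N → ℝ,
    (∀ e ∈ G.E, y e ∈ basePolytope (G.w e) ∧
        ∀ z ∈ basePolytope (G.w e), dotp z x ≤ dotp (y e) x) ∧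
    (if 1 < p then
        ∀ v, ∑ e ∈ G.E, G.θ e * G.fe e x ^ (p - 1) * y e v
              = lam * G.μ v * (|x v| ^ (p - 1) * sgn (x v))
      else
        (∀ v, x v ≠ 0 → ∑ e ∈ G.E, G.θ e * y e v = lam * G.μ v * sgn (x v)) ∧
        (∀ v, x v = 0 → |∑ e ∈ G.E, G.θ e * y e v| ≤ lam * G.μ v))

/-- Vertices `u, v` are connected inside the induced sub-hypergraph `G[W]`
(the boundary volume in `G[W]` of `S ⊆ W` equals `Σ_{e ∈ E} θ_e w_e(S)`). -/
def VertConnectedIn (W : Finset (Fin N)) (u v : Fin N) : Prop :=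
  u = v ∨ ∀ S ⊆ W, u ∈ S → v ∉ S → 0 < G.volB S

/-- `C` is (the vertex set of) a connected component of the induced sub-hypergraph `G[W]`. -/
def IsComponent (W C : Finset (Fin N)) : Prop :=
  C ⊆ W ∧ C.Nonempty ∧
    (∀ u ∈ C, ∀ v ∈ C, G.VertConnectedIn W u v) ∧
    (∀ u ∈ C, ∀ v ∈ W, G.VertConnectedIn W u v → v ∈ C)

end SubmodularHypergraph

def posSupp {N : ℕ} (x : Fin N → ℝ) : Finset (Fin N) := Finset.univ.filter fun v => 0 < x v
def negSupp {N : ℕ} (x : Fin N → ℝ) : Finset (Fin N) := Finset.univ.filter fun v => x v < 0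
def nonnegSupp {N : ℕ} (x : Fin N → ℝ) : Finset (Fin N) := Finset.univ.filter fun v => 0 ≤ x v
def nonposSupp {N : ℕ} (x : Fin N → ℝ) : Finset (Fin N) := Finset.univ.filter fun v => x v ≤ 0

namespace SubmodularHypergraph

variable {N : ℕ} (G : SubmodularHypergraph N)

/-- The number of strong nodal domains of `x` (positive ones plus negative ones). -/
def strongNodalCount (x : Fin N → ℝ) : ℕ :=
  {C : Finset (Fin N) | G.IsComponent (posSupp x) C}.ncard +
  {C : Finset (Fin N) | G.IsComponent (negSupp x) C}.ncard

/-- The number of weak nodal domains of `x` (positive ones plus negative ones). -/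
def weakNodalCount (x : Fin N → ℝ) : ℕ :=
  {C : Finset (Fin N) | G.IsComponent (nonnegSupp x) C}.ncard +
  {C : Finset (Fin N) | G.IsComponent (nonposSupp x) C}.ncard

/-- The collection of strong nodal domains of `x`. -/
def strongNodalDomains (x : Fin N → ℝ) : Set (Finset (Fin N)) :=
  {C | G.IsComponent (posSupp x) C ∨ G.IsComponent (negSupp x) C}

/-- The collection of weak nodal domains of `x`. -/
def weakNodalDomains (x : Fin N → ℝ) : Set (Finset (Fin N)) :=
  {C | G.IsComponent (nonnegSupp x) C ∨ G.IsComponent (nonposSupp x) C}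

/-- `Z_{p,μ}(x) = min_c ‖x − c·𝟙‖_{ℓp,μ}^p`. -/
def Z (p : ℝ) (x : Fin N → ℝ) : ℝ := ⨅ c : ℝ, ∑ v, G.μ v * |x v - c| ^ p

/-- `𝓡_p(x) = Q_p(x) / Z_{p,μ}(x)`. -/
def Rq (p : ℝ) (x : Fin N → ℝ) : ℝ := G.Q p x / G.Z p x

/-- The `k`-way Cheeger constant `h_k`. -/
def cheegerConst (k : ℕ) : ℝ :=
  sInf {c : ℝ | ∃ S : Fin k → Finset (Fin N),
    (∀ i, (S i).Nonempty) ∧ (∀ i j, i ≠ j → Disjoint (S i) (S j)) ∧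
    c = ⨆ i, G.conductance (S i)}

end SubmodularHypergraph

/-- There is an odd continuous map `h : A → ℝ^k ∖ {0}`. -/
def genusLE {N : ℕ} (A : Set (Fin N → ℝ)) (k : ℕ) : Prop :=
  ∃ h : (Fin N → ℝ) → (Fin k → ℝ),
    ContinuousOn h A ∧ (∀ x ∈ A, h (-x) = -h x) ∧ ∀ x ∈ A, h x ≠ 0

/-- The Krasnoselski genus of a set. -/
def genus {N : ℕ} (A : Set (Fin N → ℝ)) : ℕ∞ :=
  sInf ((fun n : ℕ => (n : ℕ∞)) '' {n | genusLE A n})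

namespace SubmodularHypergraph

variable {N : ℕ} (G : SubmodularHypergraph N)

/-- The `k`-th variational eigenvalue `λ_k^{(p)}` of `△_p`:
`min` over closed symmetric `A ⊆ S_{p,μ}` with `γ(A) ≥ k` of `max_{x ∈ A} Q_p(x)`. -/
def varEigen (p : ℝ) (k : ℕ) : ℝ :=
  sInf ((fun A : Set (Fin N → ℝ) => sSup (G.Q p '' A)) ''
    {A | IsClosed A ∧ (∀ x ∈ A, -x ∈ A) ∧
         A ⊆ {x | G.normLpPow p x = 1} ∧ (k : ℕ∞) ≤ genus A})

end SubmodularHypergraph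

def signedPow (q t : ℝ) : ℝ := |t| ^ q * Real.sign t

lemma signedPow_neg (q t : ℝ) : signedPow q (-t) = -signedPow q t := by
  simp [signedPow, Real.sign_neg]

lemma signedPow_eq_max_sub_max {q : ℝ} (hq : 0 < q) (t : ℝ) :
    signedPow q t = max t 0 ^ q - max (-t) 0 ^ q := by
  rcases lt_trichotomy t 0 with ht | rfl | ht
  · simp [signedPow, Real.sign_of_neg ht, abs_of_neg ht, ht.le, Real.zero_rpow hq.ne']
  · simp [signedPow]
  · simp [signedPow, Real.sign_of_pos ht, abs_of_pos ht, ht.le, Real.zero_rpow hq.ne']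

lemma continuous_signedPow {q : ℝ} (hq : 0 < q) : Continuous (signedPow q) := by
  simp only [funext (signedPow_eq_max_sub_max hq)]
  fun_prop (disch := exact hq.le)

lemma signedPow_ne_zero (q : ℝ) {t : ℝ} (ht : t ≠ 0) : signedPow q t ≠ 0 :=
  mul_ne_zero (Real.rpow_pos_of_pos (abs_pos.mpr ht) q).ne'
    (Real.sign_eq_zero_iff.not.mpr ht)

/-- Tangent line inequality for the convex function `|·| ^ p`, whose derivative at `a` is
`p * signedPow (p - 1) a`. -/
lemma abs_rpow_sub_mul_signedPow_le {p : ℝ} (hp : 1 ≤ p) (a c : ℝ) :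
    |a| ^ p - p * signedPow (p - 1) a * c ≤ |a - c| ^ p := by
  rcases eq_or_ne a 0 with rfl | ha
  · simp [signedPow, Real.zero_rpow (by positivity : p ≠ 0)]
    positivity
  set y := 1 - c / a
  have hbern : 1 + p * (|y| - 1) ≤ |y| ^ p := by
    have h := one_add_mul_self_le_rpow_one_add (s := |y| - 1) (by linarith [abs_nonneg y]) hp
    rwa [add_sub_cancel] at h
  have hslope : |a| ^ p * (c / a) = signedPow (p - 1) a * c := by
    rw [signedPow, Real.rpow_sub_one (abs_ne_zero.mpr ha)]
    rcases ha.lt_or_gt with ha | ha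
    · rw [abs_of_neg ha, Real.sign_of_neg ha]; field_simp
    · rw [abs_of_pos ha, Real.sign_of_pos ha]; field_simp
  have hac : |a - c| ^ p = |a| ^ p * |y| ^ p := by
    rw [← Real.mul_rpow (abs_nonneg a) (abs_nonneg y), ← abs_mul]
    congr 2
    simp only [y]
    field_simp
  have hpa : 0 ≤ |a| ^ p := by positivity
  calc |a| ^ p - p * signedPow (p - 1) a * c = |a| ^ p * (1 + p * (y - 1)) := by
        rw [mul_assoc, ← hslope]; simp only [y]; ring
    _ ≤ |a| ^ p * (1 + p * (|y| - 1)) := by gcongr; exact le_abs_self y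
    _ ≤ |a| ^ p * |y| ^ p := by gcongr
    _ = |a - c| ^ p := hac.symm

lemma rpow_neg_inv_rpow {n p : ℝ} (hn : 0 ≤ n) (hp : p ≠ 0) : (n ^ (-p⁻¹)) ^ p = n⁻¹ := by
  rw [← Real.rpow_mul hn, neg_mul, inv_mul_cancel₀ hp, Real.rpow_neg_one]

section Lovasz

variable {N : ℕ} (F : Finset (Fin N) → ℝ) (x : Fin N → ℝ)

lemma iInf_le_iSup_fin : ⨅ v, x v ≤ ⨆ v, x v := by
  rcases isEmpty_or_nonempty (Fin N) with hN | hN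
  · simp [Real.iInf_of_isEmpty, Real.iSup_of_isEmpty]
  · exact ciInf_le_ciSup (Set.finite_range x).bddBelow (Set.finite_range x).bddAbove

lemma lovasz_nonneg (hF : ∀ S, 0 ≤ F S) : 0 ≤ lovasz F x :=
  intervalIntegral.integral_nonneg (iInf_le_iSup_fin x) fun _ _ => hF _

lemma lovasz_le_iSup_sub_iInf (hF0 : ∀ S, 0 ≤ F S) (hF1 : ∀ S, F S ≤ 1) :
    lovasz F x ≤ (⨆ v, x v) - ⨅ v, x v := by
  have h := intervalIntegral.norm_integral_le_of_norm_le_const (C := 1)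
    (a := ⨅ v, x v) (b := ⨆ v, x v) (f := fun t => F (Finset.univ.filter fun v => t < x v))
    fun t _ => by rw [Real.norm_eq_abs, abs_of_nonneg (hF0 _)]; exact hF1 _
  rw [one_mul, abs_of_nonneg (sub_nonneg.mpr (iInf_le_iSup_fin x))] at h
  exact (le_abs_self _).trans h

lemma lovasz_mul_add {a : ℝ} (ha : 0 ≤ a) (b : ℝ) :
    lovasz F (fun v => a * x v + b) = a * lovasz F x := by
  rcases isEmpty_or_nonempty (Fin N) with hN | hN
  · simp [lovasz, Real.iInf_of_isEmpty, Real.iSup_of_isEmpty]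
  rcases ha.eq_or_lt with rfl | ha
  · simp [lovasz]
  have hmono : Monotone fun t => a * t + b := fun s t hst =>
    add_le_add_left (mul_le_mul_of_nonneg_left hst ha.le) b
  have hcont : Continuous fun t => a * t + b := by fun_prop
  unfold lovasz
  rw [← hmono.map_ciInf_of_continuousAt hcont.continuousAt (Set.finite_range x).bddBelow,
    ← hmono.map_ciSup_of_continuousAt hcont.continuousAt (Set.finite_range x).bddAbove]
  have hlevel : ∀ t, (Finset.univ.filter fun v => a * t + b < a * x v + b)
      = Finset.univ.filter fun v => t < x v := fun t => by
    ext v; simp [mul_lt_mul_iff_right₀ ha]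
  have h := intervalIntegral.integral_comp_mul_add (a := ⨅ v, x v) (b := ⨆ v, x v)
    (fun u => F (Finset.univ.filter fun v => u < a * x v + b)) ha.ne' b
  simp only [hlevel] at h
  rw [h, smul_eq_mul, mul_inv_cancel_left₀ ha.ne']

/-- The level sets of `-x` are the complements of those of `x`, up to the finitely many values
of `x`. -/
lemma lovasz_neg (hF : ∀ S, F (Finset.univ \ S) = F S) :
    lovasz F (fun v => -x v) = lovasz F x := by
  rcases isEmpty_or_nonempty (Fin N) with hN | hN
  · simp [lovasz, Real.iInf_of_isEmpty, Real.iSup_of_isEmpty]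
  have hanti : Antitone fun t : ℝ => -t := fun _ _ h => neg_le_neg h
  unfold lovasz
  rw [← hanti.map_ciSup_of_continuousAt continuous_neg.continuousAt (Set.finite_range x).bddAbove,
    ← hanti.map_ciInf_of_continuousAt continuous_neg.continuousAt (Set.finite_range x).bddBelow,
    ← intervalIntegral.integral_comp_neg]
  refine intervalIntegral.integral_congr_ae ?_
  filter_upwards [(Set.finite_range x).countable.ae_notMem _] with t ht _
  rw [← hF]
  congr 1
  ext v
  have : x v ≠ t := fun h => ht ⟨v, h⟩
  simp only [Finset.mem_filter, Finset.mem_univ, true_and, Finset.mem_sdiff, not_lt, neg_lt_neg_iff]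
  exact ⟨fun h => lt_of_le_of_ne h this.symm, le_of_lt⟩

end Lovasz

namespace SubmodularHypergraph

variable {N : ℕ} (G : SubmodularHypergraph N) {p : ℝ}

lemma normLpPow_nonneg (x : Fin N → ℝ) : 0 ≤ G.normLpPow p x :=
  Finset.sum_nonneg fun v _ => mul_nonneg (G.μ_pos v).le (Real.rpow_nonneg (abs_nonneg _) p)

lemma term_le_normLpPow (x : Fin N → ℝ) (v : Fin N) :
    G.μ v * |x v| ^ p ≤ G.normLpPow p x :=
  Finset.single_le_sum (f := fun w => G.μ w * |x w| ^ p)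
    (fun w _ => mul_nonneg (G.μ_pos w).le (Real.rpow_nonneg (abs_nonneg _) p)) (Finset.mem_univ v)

lemma normLpPow_mul (x : Fin N → ℝ) (t : ℝ) :
    G.normLpPow p (fun v => t * x v) = |t| ^ p * G.normLpPow p x := by
  rw [normLpPow, normLpPow, Finset.mul_sum]
  refine Finset.sum_congr rfl fun v _ => ?_
  rw [abs_mul, Real.mul_rpow (abs_nonneg t) (abs_nonneg _)]
  ring

lemma normLpPow_neg (x : Fin N → ℝ) : G.normLpPow p (-x) = G.normLpPow p x := by
  simp [normLpPow]

lemma normLpPow_pos {x : Fin N → ℝ} (hx : x ≠ 0) : 0 < G.normLpPow p x := by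
  obtain ⟨v, hv⟩ := Function.ne_iff.mp hx
  exact (mul_pos (G.μ_pos v) (Real.rpow_pos_of_pos (abs_pos.mpr hv) p)).trans_le
    (G.term_le_normLpPow x v)

lemma continuous_normLpPow (hp : 0 ≤ p) : Continuous (G.normLpPow p) := by
  unfold normLpPow
  fun_prop (disch := exact hp)

lemma w_univ_sdiff {e : Finset (Fin N)} (he : e ∈ G.E) (S : Finset (Fin N)) :
    G.w e (Finset.univ \ S) = G.w e S := by
  rw [G.w_inter e he, G.w_inter e he S, G.w_symm e he _ Finset.inter_subset_right]
  congr 1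
  ext v
  simp only [Finset.mem_inter, Finset.mem_sdiff, Finset.mem_univ, true_and]
  tauto

lemma fe_nonneg {e : Finset (Fin N)} (he : e ∈ G.E) (x : Fin N → ℝ) : 0 ≤ G.fe e x :=
  lovasz_nonneg _ x (G.w_nonneg e he)

lemma fe_mul_add {e : Finset (Fin N)} (he : e ∈ G.E) (x : Fin N → ℝ) (a b : ℝ) :
    G.fe e (fun v => a * x v + b) = |a| * G.fe e x := by
  rcases le_or_gt 0 a with ha | ha
  · rw [abs_of_nonneg ha]
    exact lovasz_mul_add _ x ha b
  · have h := lovasz_mul_add (G.w e) (fun v => -x v) (neg_nonneg.mpr ha.le) b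
    simp only [neg_mul_neg] at h
    rw [fe, h, lovasz_neg _ x (G.w_univ_sdiff he), abs_of_neg ha, fe]

lemma Q_nonneg (x : Fin N → ℝ) : 0 ≤ G.Q p x :=
  Finset.sum_nonneg fun e he =>
    mul_nonneg (G.θ_pos e he).le (Real.rpow_nonneg (G.fe_nonneg he x) p)

lemma Q_mul_add (x : Fin N → ℝ) (a b : ℝ) :
    G.Q p (fun v => a * x v + b) = |a| ^ p * G.Q p x := by
  rw [Q, Q, Finset.mul_sum]
  refine Finset.sum_congr rfl fun e he => ?_
  rw [G.fe_mul_add he, Real.mul_rpow (abs_nonneg a) (G.fe_nonneg he x)]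
  ring

lemma Q_le_of_abs_le (hp : 0 ≤ p) {x : Fin N → ℝ} {M : ℝ} (hM : 0 ≤ M)
    (hx : ∀ v, |x v| ≤ M) : G.Q p x ≤ ∑ e ∈ G.E, G.θ e * (2 * M) ^ p := by
  have hsup : ⨆ v, x v ≤ M := Real.iSup_le (fun v => (le_abs_self _).trans (hx v)) hM
  have hinf : -M ≤ ⨅ v, x v := Real.le_iInf (fun v => (abs_le.mp (hx v)).1) (by linarith)
  refine Finset.sum_le_sum fun e he => ?_
  gcongr
  · exact (G.θ_pos e he).le
  · exact G.fe_nonneg he x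
  · linarith [show G.fe e x ≤ _ from
      lovasz_le_iSup_sub_iInf (G.w e) x (G.w_nonneg e he) (G.w_le_one e he)]

lemma bddAbove_Q_image_of_subset (hp : 0 < p) {A : Set (Fin N → ℝ)}
    (hA : A ⊆ {x | G.normLpPow p x = 1}) : BddAbove (G.Q p '' A) := by
  set M := ∑ v, (G.μ v)⁻¹ ^ p⁻¹
  have hterm : ∀ v, 0 ≤ (G.μ v)⁻¹ ^ p⁻¹ := fun v =>
    Real.rpow_nonneg (inv_nonneg.mpr (G.μ_pos v).le) _
  have hM : 0 ≤ M := Finset.sum_nonneg fun v _ => hterm v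
  refine ⟨∑ e ∈ G.E, G.θ e * (2 * M) ^ p, ?_⟩
  rintro _ ⟨x, hx, rfl⟩
  refine G.Q_le_of_abs_le hp.le hM fun v => ?_
  have hμ := G.μ_pos v
  have hv : |x v| ^ p ≤ (G.μ v)⁻¹ := by
    rw [← mul_one (G.μ v)⁻¹, le_inv_mul_iff₀ hμ]
    exact (G.term_le_normLpPow x v).trans (hA hx).le
  calc |x v| = (|x v| ^ p) ^ p⁻¹ := (Real.rpow_rpow_inv (abs_nonneg _) hp.ne').symm
    _ ≤ (G.μ v)⁻¹ ^ p⁻¹ := by gcongr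
    _ ≤ M := Finset.single_le_sum (f := fun w => (G.μ w)⁻¹ ^ p⁻¹)
        (fun w _ => hterm w) (Finset.mem_univ v)

lemma Z_nonneg (x : Fin N → ℝ) : 0 ≤ G.Z p x :=
  le_ciInf fun c => G.normLpPow_nonneg (fun v => x v - c)

lemma Z_le (x : Fin N → ℝ) (c : ℝ) : G.Z p x ≤ G.normLpPow p (fun v => x v - c) :=
  ciInf_le ⟨0, by rintro _ ⟨c', rfl⟩; exact G.normLpPow_nonneg (fun v => x v - c')⟩ c

lemma Z_pos (hp : 0 ≤ p) {x : Fin N → ℝ} (hx : Nonconstant x) : 0 < G.Z p x := by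
  obtain ⟨u, v, huv⟩ := hx
  set d := |x u - x v| / 2
  have hd : 0 < d := half_pos (abs_pos.mpr (sub_ne_zero.mpr huv))
  set δ := min (G.μ u) (G.μ v) * d ^ p
  have hδ : 0 < δ := mul_pos (lt_min (G.μ_pos u) (G.μ_pos v)) (Real.rpow_pos_of_pos hd p)
  refine hδ.trans_le (le_ciInf fun c => ?_)
  have hfar : ∀ w, min (G.μ u) (G.μ v) ≤ G.μ w → d ≤ |x w - c| →
      δ ≤ G.normLpPow p (fun v => x v - c) := fun w hμ hdw =>
    (mul_le_mul hμ (Real.rpow_le_rpow hd.le hdw hp) (Real.rpow_nonneg hd.le p)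
      (G.μ_pos w).le).trans (G.term_le_normLpPow (fun v => x v - c) w)
  have htri : 2 * d ≤ |x u - c| + |x v - c| := by
    have := abs_sub_le (x u) c (x v)
    rw [abs_sub_comm c] at this
    simp only [d]
    linarith
  rcases le_total (|x u - c|) (|x v - c|) with h | h
  · exact hfar v (min_le_right _ _) (by linarith)
  · exact hfar u (min_le_left _ _) (by linarith)

lemma Rq_nonneg (x : Fin N → ℝ) : 0 ≤ G.Rq p x :=
  div_nonneg (G.Q_nonneg x) (G.Z_nonneg x)

lemma mul_Z_le_normLpPow_mul_add (hp : 0 < p) (x : Fin N → ℝ) (a b : ℝ) :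
    |a| ^ p * G.Z p x ≤ G.normLpPow p (fun v => a * x v + b) := by
  rcases eq_or_ne a 0 with rfl | ha
  · rw [abs_zero, Real.zero_rpow hp.ne', zero_mul]
    exact G.normLpPow_nonneg _
  have hshift : (fun v => a * x v + b) = fun v => a * (x v - -b / a) := by
    funext v; field_simp; ring
  rw [hshift, G.normLpPow_mul (fun v => x v - -b / a)]
  exact mul_le_mul_of_nonneg_left (G.Z_le x _) (Real.rpow_nonneg (abs_nonneg a) p)

lemma Q_mul_add_div_normLpPow_le_Rq (hp : 0 < p) {x : Fin N → ℝ} (hx : Nonconstant x)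
    (a b : ℝ) :
    G.Q p (fun v => a * x v + b) / G.normLpPow p (fun v => a * x v + b) ≤ G.Rq p x := by
  rw [G.Q_mul_add]
  rcases eq_or_ne a 0 with rfl | ha
  · simpa [Real.zero_rpow hp.ne'] using G.Rq_nonneg x
  have hapos : 0 < |a| ^ p := Real.rpow_pos_of_pos (abs_pos.mpr ha) p
  calc |a| ^ p * G.Q p x / G.normLpPow p (fun v => a * x v + b)
      ≤ |a| ^ p * G.Q p x / (|a| ^ p * G.Z p x) :=
        div_le_div_of_nonneg_left (mul_nonneg hapos.le (G.Q_nonneg x))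
          (mul_pos hapos (G.Z_pos hp.le hx)) (G.mul_Z_le_normLpPow_mul_add hp x a b)
    _ = G.Rq p x := mul_div_mul_left _ _ hapos.ne'

def normalize (p : ℝ) (x : Fin N → ℝ) : Fin N → ℝ :=
  fun v => G.normLpPow p x ^ (-p⁻¹) * x v

lemma normLpPow_normalize (hp : p ≠ 0) {x : Fin N → ℝ} (hx : x ≠ 0) :
    G.normLpPow p (G.normalize p x) = 1 := by
  have hn := G.normLpPow_pos (p := p) hx
  unfold normalize
  rw [normLpPow_mul, abs_of_nonneg (Real.rpow_nonneg hn.le _),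
    rpow_neg_inv_rpow hn.le hp, inv_mul_cancel₀ hn.ne']

lemma Q_normalize (hp : p ≠ 0) (x : Fin N → ℝ) :
    G.Q p (G.normalize p x) = G.Q p x / G.normLpPow p x := by
  have hn := G.normLpPow_nonneg (p := p) x
  have h := G.Q_mul_add (p := p) x (G.normLpPow p x ^ (-p⁻¹)) 0
  simp only [add_zero] at h
  unfold normalize
  rw [h, abs_of_nonneg (Real.rpow_nonneg hn _), rpow_neg_inv_rpow hn hp,
    inv_mul_eq_div]

lemma normalize_neg (x : Fin N → ℝ) : G.normalize p (-x) = -G.normalize p x := by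
  funext v
  simp [normalize, normLpPow_neg]

lemma continuousOn_normalize (hp : 0 < p) : ContinuousOn (G.normalize p) {x | x ≠ 0} :=
  continuousOn_pi.mpr fun v =>
    ((G.continuous_normLpPow hp.le).continuousOn.rpow_const
      fun _ hx => Or.inl (G.normLpPow_pos hx).ne').mul (continuous_apply v).continuousOn

def balance (p : ℝ) (x : Fin N → ℝ) : ℝ := ∑ v, G.μ v * signedPow (p - 1) (x v)

lemma continuous_balance (hp : 1 < p) : Continuous (G.balance p) :=
  continuous_finsetSum _ fun v _ =>
    continuous_const.mul ((continuous_signedPow (sub_pos.mpr hp)).comp (continuous_apply v))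

lemma balance_neg (x : Fin N → ℝ) : G.balance p (-x) = -G.balance p x := by
  simp [balance, signedPow_neg]

lemma normLpPow_le_Z_of_balance_eq_zero (hp : 1 ≤ p) {x : Fin N → ℝ}
    (hx : G.balance p x = 0) : G.normLpPow p x ≤ G.Z p x := by
  refine le_ciInf fun c => ?_
  have hsum : ∑ v, G.μ v * (|x v| ^ p - p * signedPow (p - 1) (x v) * c)
      = G.normLpPow p x - p * c * G.balance p x := by
    rw [normLpPow, balance, Finset.mul_sum, ← Finset.sum_sub_distrib]
    exact Finset.sum_congr rfl fun v _ => by ring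
  rw [hx, mul_zero, sub_zero] at hsum
  rw [← hsum]
  exact Finset.sum_le_sum fun v _ => mul_le_mul_of_nonneg_left
    (abs_rpow_sub_mul_signedPow_le hp (x v) c) (G.μ_pos v).le

lemma nonconstant_of_balance_eq_zero (hp : p ≠ 0) {x : Fin N → ℝ}
    (hx : G.normLpPow p x = 1) (hbal : G.balance p x = 0) : Nonconstant x := by
  by_contra hconst
  simp only [Nonconstant, not_exists, not_not] at hconst
  have hne : x ≠ 0 := by
    rintro rfl
    simp [normLpPow, Real.zero_rpow hp] at hx
  obtain ⟨v₀, hv₀⟩ := Function.ne_iff.mp hne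
  have hsum : G.balance p x = (∑ v, G.μ v) * signedPow (p - 1) (x v₀) := by
    rw [balance, Finset.sum_mul]
    exact Finset.sum_congr rfl fun v _ => by rw [hconst v v₀]
  rw [hsum] at hbal
  exact mul_ne_zero (Finset.sum_pos (fun v _ => G.μ_pos v) ⟨v₀, Finset.mem_univ _⟩).ne'
    (signedPow_ne_zero _ hv₀) hbal

end SubmodularHypergraph

section Genus

variable {N : ℕ} {A : Set (Fin N → ℝ)}

lemma exists_zero_of_two_le_genus (hA : 2 ≤ genus A) {f : (Fin N → ℝ) → ℝ}
    (hf : ContinuousOn f A) (hodd : ∀ z ∈ A, f (-z) = -f z) : ∃ z ∈ A, f z = 0 := by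
  by_contra! hne
  have h1 : genus A ≤ ((1 : ℕ) : ℕ∞) :=
    sInf_le ⟨1, ⟨fun z _ => f z, continuousOn_pi.mpr fun _ => hf,
      fun z hz => funext fun _ => hodd z hz, fun z hz h0 => hne z hz (congrFun h0 0)⟩, rfl⟩
  exact absurd (hA.trans h1) (by norm_num)

/-- An odd real function on a connected symmetric set takes values of both signs, so it vanishes
somewhere; hence no odd map into `ℝ ∖ {0}` exists. -/
lemma two_le_genus_of_isConnected (hA : IsConnected A) (hsymm : ∀ z ∈ A, -z ∈ A) :
    2 ≤ genus A := by
  refine le_sInf ?_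
  rintro _ ⟨n, ⟨h, hcont, hodd, hnz⟩, rfl⟩
  obtain ⟨z, hz⟩ := hA.nonempty
  by_contra! hn
  have hn2 : n < 2 := by exact_mod_cast hn
  interval_cases n
  · exact hnz z hz (Subsingleton.elim _ _)
  · have hg : ContinuousOn (fun y => h y 0) A := (continuous_apply 0).comp_continuousOn hcont
    have hgneg : h (-z) 0 = -h z 0 := congrFun (hodd z hz) 0
    obtain ⟨y, hy, hy0⟩ : ∃ y ∈ A, h y 0 = 0 := by
      rcases le_total (h z 0) 0 with hle | hle
      · exact hA.isPreconnected.intermediate_value₂ hz (hsymm z hz) hg continuousOn_const hle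
          (by rw [hgneg]; linarith)
      · exact hA.isPreconnected.intermediate_value₂ (hsymm z hz) hz hg continuousOn_const
          (by rw [hgneg]; linarith) hle
    exact hnz y hy (funext fun i => by rw [Subsingleton.elim i 0]; exact hy0)

end Genus

lemma re_mul_add_im_ne_zero {N : ℕ} {x : Fin N → ℝ} (hx : Nonconstant x) {q : ℂ} (hq : q ≠ 0) :
    (fun v => q.re * x v + q.im) ≠ 0 := by
  obtain ⟨u, v, huv⟩ := hx
  intro h
  have hu := congrFun h u
  have hv := congrFun h v
  simp only [Pi.zero_apply] at hu hv
  have hre : q.re = 0 := by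
    by_contra hre
    exact huv (mul_left_cancel₀ hre (by linarith))
  exact hq (Complex.ext hre (by simpa [hre] using hu))

namespace SubmodularHypergraph

variable {N : ℕ} (G : SubmodularHypergraph N) {p : ℝ}

def admissibleSets (p : ℝ) (k : ℕ) : Set (Set (Fin N → ℝ)) :=
  {A | IsClosed A ∧ (∀ x ∈ A, -x ∈ A) ∧ A ⊆ {x | G.normLpPow p x = 1} ∧ (k : ℕ∞) ≤ genus A}

lemma varEigen_eq_sInf (p : ℝ) (k : ℕ) :
    G.varEigen p k = sInf ((fun A => sSup (G.Q p '' A)) '' G.admissibleSets p k) := rfl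

/-- The unit circle of `ℂ` parametrises the pencil `a x + b 𝟙`, `a² + b² = 1`. -/
def pencil (p : ℝ) (x : Fin N → ℝ) : Set (Fin N → ℝ) :=
  (fun q : ℂ => G.normalize p (fun v => q.re * x v + q.im)) '' Metric.sphere 0 1

lemma neg_mem_pencil {x y : Fin N → ℝ} (hy : y ∈ G.pencil p x) : -y ∈ G.pencil p x := by
  obtain ⟨q, hq, rfl⟩ := hy
  have hneg : (fun v => (-q).re * x v + (-q).im) = -fun v => q.re * x v + q.im := by
    funext v
    simp only [Complex.neg_re, Complex.neg_im, Pi.neg_apply]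
    ring
  refine ⟨-q, ?_, ?_⟩
  · rwa [mem_sphere_zero_iff_norm, norm_neg, ← mem_sphere_zero_iff_norm]
  · simp only [hneg, G.normalize_neg]

lemma pencil_mem_admissibleSets (hp : 1 < p) {x : Fin N → ℝ} (hx : Nonconstant x) :
    G.pencil p x ∈ G.admissibleSets p 2 := by
  have hp0 : 0 < p := by linarith
  have hmaps : Set.MapsTo (fun q : ℂ => fun v => q.re * x v + q.im) (Metric.sphere 0 1)
      {y | y ≠ 0} := fun q hq => re_mul_add_im_ne_zero hx (ne_zero_of_mem_unit_sphere ⟨q, hq⟩)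
  have hcont : ContinuousOn (fun q : ℂ => G.normalize p (fun v => q.re * x v + q.im))
      (Metric.sphere 0 1) :=
    (G.continuousOn_normalize hp0).comp (by fun_prop) hmaps
  have hconn : IsConnected (G.pencil p x) :=
    (isConnected_sphere (by simp [Complex.rank_real_complex]) 0 zero_le_one).image _ hcont
  refine ⟨((isCompact_sphere 0 1).image_of_continuousOn hcont).isClosed,
    fun y hy => G.neg_mem_pencil hy, ?_, ?_⟩
  · rintro _ ⟨q, hq, rfl⟩
    exact G.normLpPow_normalize hp0.ne' (hmaps hq)
  · exact_mod_cast two_le_genus_of_isConnected hconn fun y hy => G.neg_mem_pencil hy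

lemma sSup_Q_pencil_le_Rq (hp : 0 < p) {x : Fin N → ℝ} (hx : Nonconstant x) :
    sSup (G.Q p '' G.pencil p x) ≤ G.Rq p x := by
  refine Real.sSup_le ?_ (G.Rq_nonneg x)
  rintro _ ⟨_, ⟨q, -, rfl⟩, rfl⟩
  rw [G.Q_normalize hp.ne']
  exact G.Q_mul_add_div_normLpPow_le_Rq hp hx q.re q.im

lemma exists_nonconstant_Rq_le_Q (hp : 1 < p) {A : Set (Fin N → ℝ)}
    (hA : A ∈ G.admissibleSets p 2) : ∃ z ∈ A, Nonconstant z ∧ G.Rq p z ≤ G.Q p z := by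
  obtain ⟨-, -, hsphere, hgenus⟩ := hA
  obtain ⟨z, hz, hbal⟩ := exists_zero_of_two_le_genus (by exact_mod_cast hgenus)
    (G.continuous_balance hp).continuousOn fun z _ => G.balance_neg z
  have hnorm : G.normLpPow p z = 1 := hsphere hz
  have hZ : 1 ≤ G.Z p z := hnorm ▸ G.normLpPow_le_Z_of_balance_eq_zero hp.le hbal
  refine ⟨z, hz, G.nonconstant_of_balance_eq_zero (by linarith) hnorm hbal, ?_⟩
  calc G.Rq p z = G.Q p z / G.Z p z := rfl
    _ ≤ G.Q p z / 1 := div_le_div_of_nonneg_left (G.Q_nonneg z) one_pos hZ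
    _ = G.Q p z := div_one _

lemma sInf_sSup_Q_le_Rq (hp : 1 < p) {x : Fin N → ℝ} (hx : Nonconstant x) :
    sInf ((fun A => sSup (G.Q p '' A)) '' G.admissibleSets p 2) ≤ G.Rq p x := by
  have hbdd : BddBelow ((fun A => sSup (G.Q p '' A)) '' G.admissibleSets p 2) :=
    ⟨0, by
      rintro _ ⟨A, -, rfl⟩
      exact Real.sSup_nonneg (by rintro _ ⟨z, -, rfl⟩; exact G.Q_nonneg z)⟩
  exact (csInf_le hbdd ⟨_, G.pencil_mem_admissibleSets hp hx, rfl⟩).trans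
    (G.sSup_Q_pencil_le_Rq (by linarith) hx)

lemma sInf_Rq_le_sSup_Q (hp : 1 < p) {A : Set (Fin N → ℝ)} (hA : A ∈ G.admissibleSets p 2) :
    sInf {r : ℝ | ∃ x : Fin N → ℝ, Nonconstant x ∧ r = G.Rq p x} ≤ sSup (G.Q p '' A) := by
  have hbdd : BddBelow {r : ℝ | ∃ x : Fin N → ℝ, Nonconstant x ∧ r = G.Rq p x} :=
    ⟨0, by rintro _ ⟨x, -, rfl⟩; exact G.Rq_nonneg x⟩
  obtain ⟨z, hz, hzc, hRq⟩ := G.exists_nonconstant_Rq_le_Q hp hA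
  exact (csInf_le hbdd ⟨z, hzc, rfl⟩).trans <| hRq.trans <|
    le_csSup (G.bddAbove_Q_image_of_subset (by linarith) hA.2.2.1) ⟨z, hz, rfl⟩

end SubmodularHypergraph

/-- For `p > 1`,
`λ₂^{(p)} = inf over nonconstant x of 𝓡_p(x) = Q_p(x)/Z_{p,μ}(x)`. -/
theorem stmt13 {N : ℕ} (G : SubmodularHypergraph N) (p : ℝ) (hp : 1 < p) :
    G.varEigen p 2 = sInf {r : ℝ | ∃ x : Fin N → ℝ, Nonconstant x ∧ r = G.Rq p x} := by
  rw [G.varEigen_eq_sInf]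
  by_cases hS : ∃ x : Fin N → ℝ, Nonconstant x
  · obtain ⟨x₀, hx₀⟩ := hS
    apply le_antisymm
    · refine le_csInf ⟨_, x₀, hx₀, rfl⟩ ?_
      rintro _ ⟨x, hx, rfl⟩
      exact G.sInf_sSup_Q_le_Rq hp hx
    · refine le_csInf ⟨_, _, G.pencil_mem_admissibleSets hp hx₀, rfl⟩ ?_
      rintro _ ⟨A, hA, rfl⟩
      exact G.sInf_Rq_le_sSup_Q hp hA
  · -- `N ≤ 1`: both infima are taken over the empty set, so both are `0`
    have hA : G.admissibleSets p 2 = ∅ := Set.eq_empty_of_forall_notMem fun A hA =>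
      let ⟨z, _, hz, _⟩ := G.exists_nonconstant_Rq_le_Q hp hA
      hS ⟨z, hz⟩
    have hR : {r : ℝ | ∃ x : Fin N → ℝ, Nonconstant x ∧ r = G.Rq p x} = ∅ :=
      Set.eq_empty_of_forall_notMem fun _ ⟨x, hx, _⟩ => hS ⟨x, hx⟩
    rw [hA, hR, Set.image_empty, Real.sInf_empty]
end
end

section
/- Let V = [N] with positive vertex weights μ_v > 0 and vol(S) = Σ_{v∈S} μ_v. For every x ∈ ℝ^N, the Lovász extension of the set function S ↦ min{vol(S), vol(V∖S)} evaluated at x equals min_{c∈ℝ} ‖x − c·𝟙‖_{ℓ1,μ}. Explicitly, if x_{i_1} ≥ x_{i_2} ≥ … ≥ x_{i_N} is a nonincreasing ordering of the entries of x and k* = min{k : Σ_{j≤k} μ_{i_j} ≥ Σ_{j>k} μ_{i_j}}, then Σ_{k=1}^{N−1} min{Σ_{j≤k} μ_{i_j}, Σ_{j>k} μ_{i_j}} (x_{i_k} − x_{i_{k+1}}) = ‖x − x_{i_{k*}}·𝟙‖_{ℓ1,μ} = min_{c∈ℝ} ‖x − c·𝟙‖_{ℓ1,μ}. -/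
open scoped BigOperators
open Finset

noncomputable section

open Fin.NatCast

/-!
For a sorted vector the level sets `{v | t < x v}` are the prefixes `{i_0, …, i_k}`, so the
Lovász integral is the sorted sum. There the minimum is the prefix weight before `k*` and the
suffix weight from `k*` on, and exchanging the order of summation (each gap
`x_{i_k} - x_{i_{k+1}}` is counted once for every vertex on the far side of it from `i_{k*}`)
turns the sorted sum into `∑ v, μ v * |x v - x_{i_{k*}}|`. Finally `x_{i_{k*}}` is a weighted
median of `x`, and a weighted median minimises `c ↦ ∑ v, μ v * |x v - c|`.
-/

section WeightedMedian

variable {ι : Type*} (s : Finset ι) (w x : ι → ℝ)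

def IsWeightedMedian (m : ℝ) : Prop :=
  ∑ v ∈ s with x v < m, w v ≤ ∑ v ∈ s with m ≤ x v, w v ∧
    ∑ v ∈ s with m < x v, w v ≤ ∑ v ∈ s with x v ≤ m, w v

variable {s w x}

theorem sum_mul_abs_sub_le_of_le (hw : ∀ v ∈ s, 0 ≤ w v) {m c : ℝ} (hcm : c ≤ m)
    (hm : ∑ v ∈ s with x v < m, w v ≤ ∑ v ∈ s with m ≤ x v, w v) :
    ∑ v ∈ s, w v * |x v - m| ≤ ∑ v ∈ s, w v * |x v - c| := by
  -- moving the centre from `c` up to `m` gains `m - c` on the weight above `m` and loses at most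
  -- `m - c` on the weight below it
  have hpoint : ∀ v ∈ s, w v * |x v - m| + (m - c) * (if m ≤ x v then w v else -w v)
      ≤ w v * |x v - c| := by
    intro v hv
    split_ifs with h
    · rw [abs_of_nonneg (by linarith), abs_of_nonneg (by linarith)]; linarith
    · rw [abs_of_neg (by linarith)]
      nlinarith [hw v hv, neg_abs_le (x v - c)]
  have hbalance : 0 ≤ ∑ v ∈ s, (if m ≤ x v then w v else -w v) := by
    simp only [sum_ite, sum_neg_distrib, not_le]
    linarith
  calc ∑ v ∈ s, w v * |x v - m|
      ≤ ∑ v ∈ s, w v * |x v - m| + (m - c) * ∑ v ∈ s, (if m ≤ x v then w v else -w v) :=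
        le_add_of_nonneg_right (mul_nonneg (sub_nonneg.2 hcm) hbalance)
    _ ≤ ∑ v ∈ s, w v * |x v - c| := by
        rw [mul_sum, ← sum_add_distrib]
        exact sum_le_sum hpoint

theorem IsWeightedMedian.isLeast_sum_mul_abs_sub (hw : ∀ v ∈ s, 0 ≤ w v) {m : ℝ}
    (hm : IsWeightedMedian s w x m) :
    IsLeast (Set.range fun c => ∑ v ∈ s, w v * |x v - c|) (∑ v ∈ s, w v * |x v - m|) := by
  refine ⟨⟨m, rfl⟩, ?_⟩
  rintro _ ⟨c, rfl⟩
  rcases le_total c m with hcm | hmc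
  · exact sum_mul_abs_sub_le_of_le hw hcm hm.1
  · -- the case `c ≤ m` for `-x`
    have := sum_mul_abs_sub_le_of_le (x := -x) hw (neg_le_neg hmc) (by simpa using hm.2)
    simpa only [Pi.neg_apply, neg_sub_neg, abs_sub_comm m, abs_sub_comm c] using this

end WeightedMedian

section SortedSequence

variable {g a : ℕ → ℝ} {n m : ℕ}

theorem abs_sub_eq_sum_gaps (ha : AntitoneOn a (Set.Iic n)) {j : ℕ} (hj : j ≤ n)
    (hm : m ≤ n) :
    |a j - a m| = ∑ k ∈ range n with min j m ≤ k ∧ k < max j m, (a k - a (k + 1)) := by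
  have hIco : {k ∈ range n | min j m ≤ k ∧ k < max j m} = Ico (min j m) (max j m) := by
    ext k; simp only [mem_filter, mem_range, mem_Ico]; omega
  have htelescope := sum_Ico_sub (fun k => -a k) (min_le_max : min j m ≤ max j m)
  simp only [neg_sub_neg] at htelescope
  rw [hIco, htelescope]
  rcases le_total j m with hjm | hmj
  · rw [min_eq_left hjm, max_eq_right hjm, abs_of_nonneg (sub_nonneg.2 (ha hj hm hjm))]
  · rw [min_eq_right hmj, max_eq_left hmj, abs_of_nonpos (sub_nonpos.2 (ha hm hj hmj)), neg_sub]

theorem sum_ite_mul_sub_succ_eq_sum_mul_abs_sub (ha : AntitoneOn a (Set.Iic n)) (hm : m ≤ n) :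
    ∑ k ∈ range n,
        (if k < m then ∑ j ∈ range (k + 1), g j else ∑ j ∈ Icc (k + 1) n, g j)
          * (a k - a (k + 1))
      = ∑ j ∈ range (n + 1), g j * |a j - a m| := by
  have hlayer : ∀ k ∈ range n,
      (if k < m then ∑ j ∈ range (k + 1), g j else ∑ j ∈ Icc (k + 1) n, g j)
        = ∑ j ∈ range (n + 1) with min j m ≤ k ∧ k < max j m, g j := by
    intro k hk
    rw [mem_range] at hk
    split_ifs <;> congr 1 <;> ext j <;> simp only [mem_filter, mem_range, mem_Icc] <;> omega
  calc _ = ∑ k ∈ range n, ∑ j ∈ range (n + 1),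
          if min j m ≤ k ∧ k < max j m then g j * (a k - a (k + 1)) else 0 := by
        refine sum_congr rfl fun k hk => ?_
        rw [hlayer k hk, sum_mul, sum_filter]
    _ = ∑ j ∈ range (n + 1), ∑ k ∈ range n,
          if min j m ≤ k ∧ k < max j m then g j * (a k - a (k + 1)) else 0 := sum_comm
    _ = _ := by
        refine sum_congr rfl fun j hj => ?_
        rw [abs_sub_eq_sum_gaps ha (Nat.lt_succ_iff.1 (mem_range.1 hj)) hm, mul_sum, sum_filter]

theorem sum_range_lt_sum_Icc_of_lt
    (hm : IsLeast {k : ℕ | k < n + 1 ∧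
      ∑ j ∈ Icc (k + 1) n, g j ≤ ∑ j ∈ range (k + 1), g j} m)
    {k : ℕ} (hk : k < m) :
    ∑ j ∈ range (k + 1), g j < ∑ j ∈ Icc (k + 1) n, g j := by
  by_contra! h
  exact absurd (hm.2 ⟨by linarith [hm.1.1], h⟩) (not_le.2 hk)

theorem min_sum_range_sum_Icc_eq_ite
    (hm : IsLeast {k : ℕ | k < n + 1 ∧
      ∑ j ∈ Icc (k + 1) n, g j ≤ ∑ j ∈ range (k + 1), g j} m)
    (hg : ∀ j, 0 ≤ g j) (k : ℕ) :
    min (∑ j ∈ range (k + 1), g j) (∑ j ∈ Icc (k + 1) n, g j)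
      = if k < m then ∑ j ∈ range (k + 1), g j else ∑ j ∈ Icc (k + 1) n, g j := by
  split_ifs with hk
  · exact min_eq_left (sum_range_lt_sum_Icc_of_lt hm hk).le
  · refine min_eq_right ?_
    calc ∑ j ∈ Icc (k + 1) n, g j ≤ ∑ j ∈ Icc (m + 1) n, g j :=
          sum_le_sum_of_subset_of_nonneg (Icc_subset_Icc (by omega) le_rfl) fun j _ _ => hg j
      _ ≤ ∑ j ∈ range (m + 1), g j := hm.1.2
      _ ≤ ∑ j ∈ range (k + 1), g j :=
          sum_le_sum_of_subset_of_nonneg (range_subset_range.2 (by omega)) fun j _ _ => hg j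

theorem isWeightedMedian_of_isLeast
    (hm : IsLeast {k : ℕ | k < n + 1 ∧
      ∑ j ∈ Icc (k + 1) n, g j ≤ ∑ j ∈ range (k + 1), g j} m)
    (hg : ∀ j, 0 ≤ g j) (ha : AntitoneOn a (Set.Iic n)) :
    IsWeightedMedian (range (n + 1)) g a (a m) := by
  have hmn : m ≤ n := Nat.lt_succ_iff.1 hm.1.1
  have hle {j k : ℕ} (hjk : j ≤ k) (hk : k ≤ n) : a k ≤ a j :=
    ha (Set.mem_Iic.2 (hjk.trans hk)) (Set.mem_Iic.2 hk) hjk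
  have mono {s t : Finset ℕ} (hst : s ⊆ t) : ∑ j ∈ s, g j ≤ ∑ j ∈ t, g j :=
    sum_le_sum_of_subset_of_nonneg hst fun j _ _ => hg j
  have hlower : ∑ j ∈ range m, g j ≤ ∑ j ∈ Icc m n, g j := by
    rcases Nat.eq_zero_or_eq_succ_pred m with h0 | hsucc
    · rw [h0, sum_range_zero]; exact sum_nonneg fun j _ => hg j
    · rw [hsucc]; exact (sum_range_lt_sum_Icc_of_lt hm (Nat.pred_lt_self (by omega))).le
  constructor
  · calc ∑ j ∈ range (n + 1) with a j < a m, g j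
          ≤ ∑ j ∈ Icc (m + 1) n, g j := mono fun j hj => by
          simp only [mem_filter, mem_range, mem_Icc] at hj ⊢
          refine ⟨?_, by omega⟩
          by_contra h
          exact not_le.2 hj.2 (hle (by omega : j ≤ m) hmn)
      _ ≤ ∑ j ∈ range (m + 1), g j := hm.1.2
      _ ≤ ∑ j ∈ range (n + 1) with a m ≤ a j, g j := mono fun j hj => by
          simp only [mem_filter, mem_range] at hj ⊢
          exact ⟨by omega, hle (by omega) hmn⟩
  · calc ∑ j ∈ range (n + 1) with a m < a j, g j
          ≤ ∑ j ∈ range m, g j := mono fun j hj => by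
          simp only [mem_filter, mem_range] at hj ⊢
          by_contra! h
          exact not_le.2 hj.2 (hle h (by omega))
      _ ≤ ∑ j ∈ Icc m n, g j := hlower
      _ ≤ ∑ j ∈ range (n + 1) with a j ≤ a m, g j := mono fun j hj => by
          simp only [mem_filter, mem_range, mem_Icc] at hj ⊢
          exact ⟨by omega, hle hj.1 hj.2⟩

end SortedSequence

section Perm

variable {M : Type*} [AddCommMonoid M] {n : ℕ} (e : Equiv.Perm (Fin (n + 1)))
  (f : Fin (n + 1) → M)

theorem sum_univ_eq_sum_range_perm : ∑ v, f v = ∑ j ∈ range (n + 1), f (e j) := by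
  rw [← Equiv.sum_comp e f, ← Fin.sum_univ_eq_sum_range (fun j => f (e j))]
  simp only [Fin.cast_val_eq_self]

theorem sum_filter_perm_symm_eq (p : ℕ → Prop) [DecidablePred p] :
    ∑ v with p (e.symm v), f v = ∑ j ∈ range (n + 1) with p j, f (e j) := by
  rw [sum_filter, sum_filter, sum_univ_eq_sum_range_perm e]
  refine sum_congr rfl fun j hj => ?_
  rw [Equiv.symm_apply_apply, Fin.val_cast_of_lt (mem_range.1 hj)]

theorem sum_filter_perm_symm_le_eq {k : ℕ} (hk : k ≤ n) :
    ∑ v with (e.symm v : ℕ) ≤ k, f v = ∑ j ∈ range (k + 1), f (e j) := by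
  rw [sum_filter_perm_symm_eq e f (· ≤ k)]
  congr 1; ext j; simp only [mem_filter, mem_range]; omega

theorem sum_compl_filter_perm_symm_le_eq (k : ℕ) :
    ∑ v ∈ (univ.filter fun v => (e.symm v : ℕ) ≤ k)ᶜ, f v
      = ∑ j ∈ Icc (k + 1) n, f (e j) := by
  rw [compl_filter, sum_filter_perm_symm_eq e f (fun j => ¬ j ≤ k)]
  congr 1; ext j; simp only [mem_filter, mem_range, mem_Icc]; omega

end Perm

theorem integral_eq_sum_of_eqOn_Ioo {f : ℝ → ℝ} {a c : ℕ → ℝ} {n : ℕ}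
    (ha : ∀ k < n, a (k + 1) ≤ a k)
    (hf : ∀ k < n, Set.EqOn f (fun _ => c k) (Set.Ioo (a (k + 1)) (a k))) :
    ∫ t in a n..a 0, f t = ∑ k ∈ range n, c k * (a k - a (k + 1)) := by
  have hpiece : ∀ k < n, ∫ t in a (k + 1)..a k, f t = c k * (a k - a (k + 1)) := fun k hk => by
    rw [intervalIntegral.integral_congr_Ioo_of_le (ha k hk) (hf k hk),
      intervalIntegral.integral_const, smul_eq_mul, mul_comm]
  have hint : ∀ k < n, IntervalIntegrable f MeasureTheory.volume (a k) (a (k + 1)) := fun k hk =>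
    (intervalIntegrable_const.congr_uIoo
      (by rw [Set.uIoo_of_le (ha k hk)]; exact (hf k hk).symm)).symm
  rw [intervalIntegral.integral_symm, ← intervalIntegral.sum_integral_adjacent_intervals hint,
    ← sum_neg_distrib]
  refine sum_congr rfl fun k hk => ?_
  rw [intervalIntegral.integral_symm, neg_neg, hpiece k (mem_range.1 hk)]

section SortedVector

variable {N : ℕ} {x : Fin (N + 1) → ℝ} {i : Equiv.Perm (Fin (N + 1))}

theorem antitoneOn_comp_natCast (hsort : Antitone (x ∘ i)) :
    AntitoneOn (fun j : ℕ => x (i j)) (Set.Iic N) :=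
  fun _ _ _ hk hjk => hsort (Fin.natCast_mono hk hjk)

theorem iInf_eq_of_antitone_comp (hsort : Antitone (x ∘ i)) : ⨅ v, x v = x (i N) := by
  refine le_antisymm (ciInf_le (Set.finite_range x).bddBelow _) (le_ciInf fun v => ?_)
  simpa [Fin.natCast_eq_last] using hsort (Fin.le_last (i.symm v))

theorem iSup_eq_of_antitone_comp (hsort : Antitone (x ∘ i)) : ⨆ v, x v = x (i 0) := by
  refine le_antisymm (ciSup_le fun v => ?_) (le_ciSup (Set.finite_range x).bddAbove _)
  simpa using hsort (Fin.zero_le (i.symm v))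

theorem filter_lt_eq_filter_symm_le (hsort : Antitone (x ∘ i)) {k : ℕ} (hk : k < N) {t : ℝ}
    (ht : t ∈ Set.Ioo (x (i (k + 1 : ℕ))) (x (i k))) :
    (univ.filter fun v => t < x v) = univ.filter fun v => (i.symm v : ℕ) ≤ k := by
  ext v
  have hv : x v = x (i ((i.symm v : ℕ) : Fin (N + 1))) := by simp
  have hvN : (i.symm v : ℕ) ≤ N := Nat.lt_succ_iff.1 (i.symm v).isLt
  simp only [mem_filter, mem_univ, true_and]
  constructor
  · intro htv
    by_contra! hkv
    have := hsort (Fin.natCast_mono hvN (hkv : k + 1 ≤ _))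
    simp only [Function.comp_apply] at this
    linarith [ht.1]
  · intro hkv
    have := hsort (Fin.natCast_mono hk.le hkv)
    simp only [Function.comp_apply] at this
    linarith [ht.2]

theorem lovasz_eq_sum_sorted (hsort : Antitone (x ∘ i)) (F : Finset (Fin (N + 1)) → ℝ) :
    lovasz F x = ∑ k ∈ range N,
      F (univ.filter fun v => (i.symm v : ℕ) ≤ k) * (x (i k) - x (i (k + 1 : ℕ))) := by
  rw [lovasz, iInf_eq_of_antitone_comp hsort, iSup_eq_of_antitone_comp hsort]
  exact integral_eq_sum_of_eqOn_Ioo (a := fun k : ℕ => x (i k))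
    (fun k hk => hsort (Fin.natCast_mono hk k.le_succ))
    (fun k hk t ht => congrArg F (filter_lt_eq_filter_symm_le hsort hk ht))

end SortedVector

/-- On `V = [N+1]` with positive vertex weights `μ`, the Lovász
extension of `S ↦ min{vol(S), vol(V∖S)}` at `x` is `min_c ‖x − c·𝟙‖_{ℓ1,μ}`; explicitly,
for a nonincreasing ordering `x_{i_0} ≥ … ≥ x_{i_N}` (0-indexed) and the least `k*` with
`Σ_{j≤k*} μ_{i_j} ≥ Σ_{j>k*} μ_{i_j}`, the sorted-sum expression equals
`‖x − x_{i_{k*}}·𝟙‖_{ℓ1,μ} = min_c ‖x − c·𝟙‖_{ℓ1,μ}`. -/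
theorem stmt15 {N : ℕ} (μ : Fin (N + 1) → ℝ) (hμ : ∀ v, 0 < μ v)
    (x : Fin (N + 1) → ℝ) (i : Equiv.Perm (Fin (N + 1)))
    (hsort : ∀ j k : Fin (N + 1), j ≤ k → x (i k) ≤ x (i j))
    (kstar : ℕ)
    (hkstar : IsLeast {k : ℕ | k < N + 1 ∧
        (∑ j ∈ Finset.Icc (k + 1) N, μ (i (j : Fin (N + 1))))
          ≤ ∑ j ∈ Finset.range (k + 1), μ (i (j : Fin (N + 1)))} kstar) :
    (lovasz (fun S : Finset (Fin (N + 1)) => min (∑ v ∈ S, μ v) (∑ v ∈ Sᶜ, μ v)) x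
        = ⨅ c : ℝ, ∑ v, μ v * |x v - c|) ∧
    ((∑ k ∈ Finset.range N,
        min (∑ j ∈ Finset.range (k + 1), μ (i (j : Fin (N + 1))))
            (∑ j ∈ Finset.Icc (k + 1) N, μ (i (j : Fin (N + 1))))
          * (x (i (k : Fin (N + 1))) - x (i ((k + 1 : ℕ) : Fin (N + 1)))))
        = ∑ v, μ v * |x v - x (i (kstar : Fin (N + 1)))|) ∧
    ((∑ v, μ v * |x v - x (i (kstar : Fin (N + 1)))|)
        = ⨅ c : ℝ, ∑ v, μ v * |x v - c|) := by
  have hμ_nonneg : ∀ j : ℕ, 0 ≤ μ (i j) := fun j => (hμ _).le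
  have ha := antitoneOn_comp_natCast hsort
  have hcost : ∀ c, ∑ v, μ v * |x v - c| = ∑ j ∈ range (N + 1), μ (i j) * |x (i j) - c| :=
    fun c => sum_univ_eq_sum_range_perm i _
  have hmedian : ∑ v, μ v * |x v - x (i kstar)| = ⨅ c : ℝ, ∑ v, μ v * |x v - c| := by
    simp_rw [hcost]
    exact ((isWeightedMedian_of_isLeast hkstar hμ_nonneg ha).isLeast_sum_mul_abs_sub
      fun j _ => hμ_nonneg j).isGLB.ciInf_eq.symm
  have hsorted : ∑ k ∈ range N,
      min (∑ j ∈ range (k + 1), μ (i j)) (∑ j ∈ Icc (k + 1) N, μ (i j))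
        * (x (i k) - x (i (k + 1 : ℕ))) = ∑ v, μ v * |x v - x (i kstar)| := by
    simp_rw [min_sum_range_sum_Icc_eq_ite hkstar hμ_nonneg, hcost]
    exact sum_ite_mul_sub_succ_eq_sum_mul_abs_sub ha (Nat.lt_succ_iff.1 hkstar.1.1)
  have hlovasz : lovasz (fun S => min (∑ v ∈ S, μ v) (∑ v ∈ Sᶜ, μ v)) x
      = ∑ k ∈ range N,
      min (∑ j ∈ range (k + 1), μ (i j)) (∑ j ∈ Icc (k + 1) N, μ (i j))
        * (x (i k) - x (i (k + 1 : ℕ))) := by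
    rw [lovasz_eq_sum_sorted hsort]
    refine sum_congr rfl fun k hk => ?_
    rw [sum_filter_perm_symm_le_eq i μ (mem_range.1 hk).le, sum_compl_filter_perm_symm_le_eq]
  exact ⟨hlovasz.trans (hsorted.trans hmedian), hsorted, hmedian⟩
end
end

section
/- Let F : 2^{[N]} → ℝ be a symmetric, normalized submodular function with F(∅) = F([N]) = 0 and Lovász extension f. For x ∈ ℝ^N let x⁺ and x⁻ be defined coordinatewise by (x⁺)_v = max{x_v, 0} and (x⁻)_v = max{−x_v, 0}. Then f(x) = f(x⁺) + f(x⁻) for every x ∈ ℝ^N. Consequently, for any submodular hypergraph G and any p ≥ 1, Q_p(x) ≥ Q_p(x⁺) + Q_p(x⁻) for all x ∈ ℝ^N. -/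
open scoped BigOperators
open Finset

noncomputable section

open MeasureTheory

namespace Stmt17Aux

variable {N : ℕ}

/-- Integrand of the level-set form of the Lovász extension. -/
def g (F : Finset (Fin N) → ℝ) (x : Fin N → ℝ) (t : ℝ) : ℝ :=
  F (Finset.univ.filter fun v => t < x v)

lemma levelset_measurable (x : Fin N → ℝ) (S : Finset (Fin N)) :
    MeasurableSet {t : ℝ | (Finset.univ.filter fun v => t < x v) = S} := by
  have h : {t : ℝ | (Finset.univ.filter fun v => t < x v) = S}
      = ⋂ v, {t : ℝ | t < x v ↔ v ∈ S} := by
    ext t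
    simp [Finset.ext_iff, Set.mem_iInter]
  rw [h]
  refine MeasurableSet.iInter fun v => ?_
  by_cases hv : v ∈ S
  · simp only [hv, iff_true]
    exact measurableSet_Iio
  · simp only [hv, iff_false, not_lt]
    exact measurableSet_Ici

lemma g_measurable (F : Finset (Fin N) → ℝ) (x : Fin N → ℝ) : Measurable (g F x) := by
  have h : g F x = fun t => ∑ S : Finset (Fin N),
      if (Finset.univ.filter fun v => t < x v) = S then F S else 0 := by
    funext t
    rw [Finset.sum_ite_eq]
    simp [g]
  rw [h]
  exact Finset.measurable_sum _ fun S _ =>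
    Measurable.ite (levelset_measurable x S) measurable_const measurable_const

lemma g_bound (F : Finset (Fin N) → ℝ) (x : Fin N → ℝ) (t : ℝ) :
    |g F x t| ≤ ∑ S : Finset (Fin N), |F S| :=
  Finset.single_le_sum (fun S _ => abs_nonneg (F S)) (Finset.mem_univ _)

lemma intInt_of_meas_bound {f : ℝ → ℝ} (hm : Measurable f) {C : ℝ}
    (hb : ∀ t, |f t| ≤ C) (a b : ℝ) : IntervalIntegrable f volume a b := by
  refine IntervalIntegrable.mono_fun (intervalIntegrable_const (c := C))
    (hm.aestronglyMeasurable) ?_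
  filter_upwards with t
  simp only [Real.norm_eq_abs]
  exact (hb t).trans (le_abs_self C)

lemma g_intervalIntegrable (F : Finset (Fin N) → ℝ) (x : Fin N → ℝ) (a b : ℝ) :
    IntervalIntegrable (g F x) volume a b :=
  intInt_of_meas_bound (g_measurable F x) (g_bound F x) a b

lemma lovasz_eq_integral (F : Finset (Fin N) → ℝ) (hF0 : F ∅ = 0)
    (hFu : F Finset.univ = 0) (x : Fin N → ℝ) (a b : ℝ)
    (ha : a ≤ ⨅ v, x v) (hb : (⨆ v, x v) ≤ b) :
    lovasz F x = ∫ t in a..b, g F x t := by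
  by_cases hN : Nonempty (Fin N)
  · set m := ⨅ v, x v with hm
    set M := ⨆ v, x v with hM
    have hbb : BddBelow (Set.range x) := (Set.finite_range x).bddBelow
    have hba : BddAbove (Set.range x) := (Set.finite_range x).bddAbove
    have hmx : ∀ v, m ≤ x v := fun v => ciInf_le hbb v
    have hxM : ∀ v, x v ≤ M := fun v => le_ciSup hba v
    have hmM : m ≤ M := (hmx hN.some).trans (hxM hN.some)
    have h1 : ∫ t in a..m, g F x t = 0 := by
      have hzero : ∫ t in a..m, (0 : ℝ) = 0 := by simp
      rw [← hzero]
      apply intervalIntegral.integral_congr_ae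
      have hne : ∀ᵐ t : ℝ, t ≠ m := by
        rw [ae_iff]
        have : {t : ℝ | ¬ t ≠ m} = {m} := by ext t; simp
        rw [this]
        exact measure_singleton m
      filter_upwards [hne] with t htne ht
      have ht' : t ∈ Set.Ioc a m := by
        rwa [Set.uIoc_of_le (ha.trans le_rfl)] at ht
      have htm : t < m := lt_of_le_of_ne ht'.2 htne
      have : (Finset.univ.filter fun v => t < x v) = Finset.univ :=
        Finset.filter_true_of_mem fun v _ => htm.trans_le (hmx v)
      simp [g, this, hFu]
    have h2 : ∫ t in M..b, g F x t = 0 := by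
      have hzero : ∫ t in M..b, (0 : ℝ) = 0 := by simp
      rw [← hzero]
      apply intervalIntegral.integral_congr_ae
      filter_upwards with t ht
      have ht' : t ∈ Set.Ioc M b := by rwa [Set.uIoc_of_le hb] at ht
      have : (Finset.univ.filter fun v => t < x v) = ∅ :=
        Finset.filter_eq_empty_iff.2 fun v _ => not_lt.2 ((hxM v).trans ht'.1.le)
      simp [g, this, hF0]
    have hsplit : (∫ t in a..m, g F x t) + ∫ t in m..b, g F x t = ∫ t in a..b, g F x t :=
      intervalIntegral.integral_add_adjacent_intervals
        (g_intervalIntegrable F x a m) (g_intervalIntegrable F x m b)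
    have hsplit2 : (∫ t in m..M, g F x t) + ∫ t in M..b, g F x t = ∫ t in m..b, g F x t :=
      intervalIntegral.integral_add_adjacent_intervals
        (g_intervalIntegrable F x m M) (g_intervalIntegrable F x M b)
    have : lovasz F x = ∫ t in m..M, g F x t := rfl
    rw [this, ← hsplit, ← hsplit2, h1, h2]
    ring
  · have hempty : IsEmpty (Fin N) := not_nonempty_iff.mp hN
    have hg : ∀ t, g F x t = 0 := by
      intro t
      have : (Finset.univ : Finset (Fin N)) = ∅ := Finset.univ_eq_empty
      simp [g, this, hF0]
    have hinf : (⨅ v, x v) = 0 := by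
      rw [iInf, Set.range_eq_empty, Real.sInf_empty]
    have hsup : (⨆ v, x v) = 0 := by
      rw [iSup, Set.range_eq_empty, Real.sSup_empty]
    have h1 : lovasz F x = 0 := by
      unfold lovasz
      rw [hinf, hsup]
      simp
    rw [h1]
    symm
    simp only [hg]
    simp

lemma lovasz_nonneg (F : Finset (Fin N) → ℝ) (hF : ∀ S, 0 ≤ F S) (y : Fin N → ℝ) :
    0 ≤ lovasz F y := by
  unfold lovasz
  by_cases hN : Nonempty (Fin N)
  · have hbb : BddBelow (Set.range y) := (Set.finite_range y).bddBelow
    have hba : BddAbove (Set.range y) := (Set.finite_range y).bddAbove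
    have hmM : (⨅ v, y v) ≤ ⨆ v, y v := (ciInf_le hbb hN.some).trans (le_ciSup hba hN.some)
    exact intervalIntegral.integral_nonneg hmM fun t _ => hF _
  · have hempty : IsEmpty (Fin N) := not_nonempty_iff.mp hN
    have hinf : (⨅ v, y v) = 0 := by rw [iInf, Set.range_eq_empty, Real.sInf_empty]
    have hsup : (⨆ v, y v) = 0 := by rw [iSup, Set.range_eq_empty, Real.sSup_empty]
    rw [hinf, hsup]
    simp

lemma lovasz_split (F : Finset (Fin N) → ℝ)
    (hsymm : ∀ S, F S = F Sᶜ) (h0 : F ∅ = 0) (x : Fin N → ℝ) :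
    lovasz F x = lovasz F (fun v => max (x v) 0) + lovasz F (fun v => max (-x v) 0) := by
  have hFu : F Finset.univ = 0 := by
    rw [hsymm Finset.univ, Finset.compl_univ, h0]
  by_cases hN : Nonempty (Fin N)
  · set xp : Fin N → ℝ := fun v => max (x v) 0 with hxp
    set xn : Fin N → ℝ := fun v => max (-x v) 0 with hxn
    have hbb : BddBelow (Set.range x) := (Set.finite_range x).bddBelow
    have hba : BddAbove (Set.range x) := (Set.finite_range x).bddAbove
    set m := ⨅ v, x v with hm
    set M := ⨆ v, x v with hM
    have hmx : ∀ v, m ≤ x v := fun v => ciInf_le hbb v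
    have hxM : ∀ v, x v ≤ M := fun v => le_ciSup hba v
    set A := min m 0 with hA
    set B := max M 0 with hB
    have hA0 : A ≤ 0 := min_le_right m 0
    have h0B : (0:ℝ) ≤ B := le_max_right M 0
    -- f(x) = ∫_A^B g x
    have hfx : lovasz F x = ∫ t in A..B, g F x t :=
      lovasz_eq_integral F h0 hFu x A B (min_le_left m 0) (le_max_left M 0)
    -- f(x⁺) = ∫_A^B g x⁺
    have hfxp : lovasz F xp = ∫ t in A..B, g F xp t := by
      apply lovasz_eq_integral F h0 hFu xp A B
      · exact le_ciInf fun v => hA0.trans (le_max_right _ _)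
      · exact ciSup_le fun v => max_le_max (hxM v) le_rfl
    -- f(x⁻) = ∫_{-B}^{-A} g x⁻ = ∫_A^B g x⁻ (-s)
    have hfxn : lovasz F xn = ∫ s in A..B, g F xn (-s) := by
      rw [intervalIntegral.integral_comp_neg (fun t => g F xn t)]
      apply lovasz_eq_integral F h0 hFu xn (-B) (-A)
      · exact le_ciInf fun v => (neg_nonpos.mpr h0B).trans (le_max_right _ _)
      · refine ciSup_le fun v => max_le ?_ ?_
        · exact neg_le_neg ((min_le_left m 0).trans (hmx v))
        · exact neg_nonneg.mpr hA0
    -- pointwise a.e. identity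
    have hnull : volume ({0} ∪ Set.range x : Set ℝ) = 0 :=
      Set.Countable.measure_zero ((Set.countable_singleton 0).union (Set.countable_range x)) _
    have hae : ({0} ∪ Set.range x : Set ℝ)ᶜ ∈ ae volume := compl_mem_ae_iff.mpr hnull
    have hcongr : ∫ t in A..B, g F x t
        = ∫ s in A..B, (g F xp s + g F xn (-s)) := by
      apply intervalIntegral.integral_congr_ae
      filter_upwards [hae] with s hs _
      simp only [Set.mem_compl_iff, Set.mem_union, Set.mem_singleton_iff,
        Set.mem_range, not_or, not_exists] at hs
      obtain ⟨hs0, hsx⟩ := hs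
      rcases lt_or_gt_of_ne hs0 with hneg | hpos
      · -- s < 0
        have hp1 : (Finset.univ.filter fun v => s < xp v) = Finset.univ :=
          Finset.filter_true_of_mem fun v _ => hneg.trans_le (le_max_right _ _)
        have hn1 : (Finset.univ.filter fun v => -s < xn v)
            = Finset.univ.filter fun v => x v < s := by
          apply Finset.filter_congr
          intro v _
          simp only [hxn, lt_max_iff]
          constructor
          · rintro (h | h)
            · linarith
            · linarith
          · intro h; left; linarith
        have hcompl : (Finset.univ.filter fun v => s < x v)ᶜ
            = Finset.univ.filter fun v => x v < s := by
          rw [Finset.compl_filter]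
          apply Finset.filter_congr
          intro v _
          rw [not_lt]
          constructor
          · intro h; exact lt_of_le_of_ne h (hsx v)
          · exact le_of_lt
        simp only [g, hp1, hn1, hFu]
        rw [hsymm (Finset.univ.filter fun v => s < x v), hcompl]
        ring
      · -- 0 < s
        have hp1 : (Finset.univ.filter fun v => s < xp v)
            = Finset.univ.filter fun v => s < x v := by
          apply Finset.filter_congr
          intro v _
          simp only [hxp, lt_max_iff]
          constructor
          · rintro (h | h)
            · exact h
            · linarith
          · exact Or.inl
        have hn1 : (Finset.univ.filter fun v => -s < xn v) = Finset.univ :=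
          Finset.filter_true_of_mem fun v _ =>
            lt_of_lt_of_le (by linarith) (le_max_right _ _)
        simp only [g, hp1, hn1, hFu]
        ring
    have hint_p : IntervalIntegrable (g F xp) volume A B := g_intervalIntegrable F xp A B
    have hint_n : IntervalIntegrable (fun s => g F xn (-s)) volume A B :=
      intInt_of_meas_bound ((g_measurable F xn).comp measurable_neg)
        (fun t => g_bound F xn (-t)) A B
    rw [hfx, hcongr, intervalIntegral.integral_add hint_p hint_n, hfxp, hfxn]
  · have hempty : IsEmpty (Fin N) := not_nonempty_iff.mp hN
    have hz : ∀ y : Fin N → ℝ, lovasz F y = 0 := by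
      intro y
      unfold lovasz
      have hinf : (⨅ v, y v) = 0 := by rw [iInf, Set.range_eq_empty, Real.sInf_empty]
      have hsup : (⨆ v, y v) = 0 := by rw [iSup, Set.range_eq_empty, Real.sSup_empty]
      rw [hinf, hsup]
      simp
    rw [hz, hz, hz]
    ring

lemma real_add_rpow {a b p : ℝ} (ha : 0 ≤ a) (hb : 0 ≤ b) (hp : 1 ≤ p) :
    a ^ p + b ^ p ≤ (a + b) ^ p := by
  have h := NNReal.add_rpow_le_rpow_add (a.toNNReal) (b.toNNReal) hp
  have h' := NNReal.coe_le_coe.2 h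
  push_cast [NNReal.coe_rpow] at h'
  rwa [Real.coe_toNNReal a ha, Real.coe_toNNReal b hb] at h'

end Stmt17Aux

/-- For a symmetric normalized submodular `F`,
`f(x) = f(x⁺) + f(x⁻)`; consequently, for any submodular hypergraph and any `p ≥ 1`,
`Q_p(x) ≥ Q_p(x⁺) + Q_p(x⁻)`. -/
theorem stmt17 :
    (∀ (N : ℕ) (F : Finset (Fin N) → ℝ), Submodular F →
      (∀ S : Finset (Fin N), F S = F Sᶜ) → F ∅ = 0 →
      ∀ x : Fin N → ℝ,
        lovasz F x
          = lovasz F (fun v => max (x v) 0) + lovasz F (fun v => max (-x v) 0)) ∧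
    (∀ (N : ℕ) (G : SubmodularHypergraph N) (p : ℝ), 1 ≤ p →
      ∀ x : Fin N → ℝ,
        G.Q p (fun v => max (x v) 0) + G.Q p (fun v => max (-x v) 0) ≤ G.Q p x) := by
  constructor
  · intro N F _ hsymm h0 x
    exact Stmt17Aux.lovasz_split F hsymm h0 x
  · intro N G p hp x
    unfold SubmodularHypergraph.Q
    rw [← Finset.sum_add_distrib]
    apply Finset.sum_le_sum
    intro e he
    rw [← mul_add]
    apply mul_le_mul_of_nonneg_left _ (G.θ_pos e he).le
    have hsymm : ∀ S : Finset (Fin N), G.w e S = G.w e Sᶜ := by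
      intro S
      have h1 : G.w e S = G.w e (S ∩ e) := G.w_inter e he S
      have h2 : G.w e (S ∩ e) = G.w e (e \ (S ∩ e)) :=
        G.w_symm e he _ Finset.inter_subset_right
      have h3 : e \ (S ∩ e) = Sᶜ ∩ e := by
        ext v
        simp only [Finset.mem_sdiff, Finset.mem_inter, Finset.mem_compl]
        tauto
      rw [h1, h2, h3, ← G.w_inter e he Sᶜ]
    have hsplit := Stmt17Aux.lovasz_split (G.w e) hsymm (G.w_empty e he) x
    have hnn := G.w_nonneg e he
    have ha : 0 ≤ G.fe e (fun v => max (x v) 0) := Stmt17Aux.lovasz_nonneg _ hnn _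
    have hb : 0 ≤ G.fe e (fun v => max (-x v) 0) := Stmt17Aux.lovasz_nonneg _ hnn _
    have hfe : G.fe e x
        = G.fe e (fun v => max (x v) 0) + G.fe e (fun v => max (-x v) 0) := hsplit
    rw [hfe]
    exact Stmt17Aux.real_add_rpow ha hb hp
end
end
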